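/- Let X₁, …, Xₙ be independent real random variables on a probability space with E[Xᵢ] = 0 for each i, and let K₁, …, Kₙ > 0 be such that for each i, exp(|Xᵢ|/Kᵢ) is integrable and E[exp(|Xᵢ|/Kᵢ) − 1 − |Xᵢ|/Kᵢ] ≤ 1. Set Sₙ = X₁ + ⋯ + Xₙ, B² = K₁² + ⋯ + Kₙ², and M = max(K₁, …, Kₙ). Then for every real x ≥ 0, P(Sₙ ≥ x) ≤ exp(−min(x²/(4B²), x/(2M))). -/

import Mathlib

/-!
Chernoff's method. The Orlicz condition controls the moment generating function: from the
pointwise inequality `ψ₁₁(t u) ≤ t² ψ₁₁(u)` for `0 ≤ t ≤ 1`, `u ≥ 0`, together with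
`ψ₁₁(y) ≤ ψ₁₁(|y|)`, one gets `E[exp(t Xᵢ)] ≤ 1 + (t Kᵢ)² ≤ exp(t² Kᵢ²)` whenever `t Kᵢ ≤ 1`.
By independence `P(Sₙ ≥ x) ≤ exp(t² B² - t x)` for `0 ≤ t ≤ 1/M`, and the choice
`t = min(x/(2B²), 1/M)` gives the bound.
-/

open MeasureTheory ProbabilityTheory Finset Real

noncomputable def psi11 (u : ℝ) : ℝ := exp u - 1 - u

lemma psi11_le_psi11_abs (y : ℝ) : psi11 y ≤ psi11 |y| := by
  rcases le_or_gt 0 y with hy | hy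
  · rw [abs_of_nonneg hy]
  · have hsinh : -y ≤ sinh (-y) := self_le_sinh_iff.2 (by linarith)
    rw [sinh_eq, neg_neg] at hsinh
    rw [abs_of_neg hy, psi11, psi11]
    linarith

lemma psi11_mul_le {t u : ℝ} (ht0 : 0 ≤ t) (ht1 : t ≤ 1) (hu : 0 ≤ u) :
    psi11 (t * u) ≤ t ^ 2 * psi11 u := by
  have hconv : ∀ v, exp (t * v) ≤ t * exp v + (1 - t) := fun v => by
    simpa [smul_eq_mul] using
      convexOn_exp.2 (Set.mem_univ v) (Set.mem_univ 0) ht0 (sub_nonneg.2 ht1) (by ring)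
  have hderiv : ∀ v, HasDerivAt (fun v => t ^ 2 * psi11 v - psi11 (t * v))
      (t * (t * (exp v - 1) - (exp (t * v) - 1))) v := fun v => by
    have hψ : ∀ w, HasDerivAt psi11 (exp w - 1) w := fun w =>
      (((hasDerivAt_exp w).sub_const 1).sub (hasDerivAt_id w)).congr_deriv (by ring)
    exact (((hψ v).const_mul _).sub ((hψ (t * v)).comp v
      ((hasDerivAt_id v).const_mul t))).congr_deriv (by simp only [mul_one]; ring)
  have hmono : MonotoneOn (fun v => t ^ 2 * psi11 v - psi11 (t * v)) (Set.Ici 0) :=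
    monotoneOn_of_hasDerivWithinAt_nonneg (convex_Ici 0)
      (fun v _ => (hderiv v).continuousAt.continuousWithinAt)
      (fun v _ => (hderiv v).hasDerivWithinAt)
      (fun v _ => mul_nonneg ht0 (by linarith [hconv v]))
  have := hmono Set.self_mem_Ici (Set.mem_Ici.2 hu) hu
  simp only [mul_zero, psi11, exp_zero] at this ⊢
  linarith

lemma exp_mul_le_one_add_add_psi11 {t K : ℝ} (y : ℝ) (ht : 0 ≤ t) (hK : 0 < K)
    (htK : t * K ≤ 1) : exp (t * y) ≤ 1 + t * y + (t * K) ^ 2 * psi11 (|y| / K) := by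
  have hscale : t * |y| = (t * K) * (|y| / K) := by field_simp
  have h1 := psi11_le_psi11_abs (t * y)
  have h2 := psi11_mul_le (mul_nonneg ht hK.le) htK (div_nonneg (abs_nonneg y) hK.le)
  rw [abs_mul, abs_of_nonneg ht, hscale, psi11] at h1
  linarith

section mgf

variable {Ω : Type*} [MeasurableSpace Ω] {μ : Measure Ω} {X : Ω → ℝ} {t K : ℝ}

lemma integrable_exp_mul_of_integrable_exp_abs_div (hX : AEMeasurable X μ) (hK : 0 < K)
    (hint : Integrable (fun ω => exp (|X ω| / K)) μ) (ht : 0 ≤ t) (htK : t * K ≤ 1) :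
    Integrable (fun ω => exp (t * X ω)) μ := by
  refine hint.mono' (hX.const_mul t).exp.aestronglyMeasurable (ae_of_all _ fun ω => ?_)
  rw [norm_of_nonneg (exp_pos _).le, exp_le_exp, le_div_iff₀ hK]
  calc t * X ω * K ≤ t * K * |X ω| := by
        rw [mul_right_comm]; exact mul_le_mul_of_nonneg_left (le_abs_self _) (by positivity)
    _ ≤ |X ω| := mul_le_of_le_one_left (abs_nonneg _) htK

lemma mgf_le_exp_sq_of_integral_psi11_le_one [IsProbabilityMeasure μ] (hX : Integrable X μ)
    (hmean : ∫ ω, X ω ∂μ = 0) (hK : 0 < K) (hint : Integrable (fun ω => exp (|X ω| / K)) μ)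
    (horlicz : ∫ ω, psi11 (|X ω| / K) ∂μ ≤ 1) (ht : 0 ≤ t) (htK : t * K ≤ 1) :
    mgf X μ t ≤ exp (t ^ 2 * K ^ 2) := by
  have hψ : Integrable (fun ω => psi11 (|X ω| / K)) μ :=
    (hint.sub (integrable_const 1)).sub (hX.abs.div_const K)
  have hlin : Integrable (fun ω => 1 + t * X ω) μ := (integrable_const 1).add (hX.const_mul t)
  calc mgf X μ t ≤ ∫ ω, (1 + t * X ω + (t * K) ^ 2 * psi11 (|X ω| / K)) ∂μ :=
        integral_mono (integrable_exp_mul_of_integrable_exp_abs_div hX.aemeasurable hK hint ht htK)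
          (hlin.add (hψ.const_mul _)) fun ω => exp_mul_le_one_add_add_psi11 (X ω) ht hK htK
    _ = 1 + (t * K) ^ 2 * ∫ ω, psi11 (|X ω| / K) ∂μ := by
        rw [integral_add hlin (hψ.const_mul _), integral_add (integrable_const 1)
          (hX.const_mul t), integral_const_mul, integral_const_mul, hmean]
        simp
    _ ≤ 1 + (t * K) ^ 2 := by gcongr; exact mul_le_of_le_one_right (sq_nonneg _) horlicz
    _ ≤ exp (t ^ 2 * K ^ 2) := by rw [← mul_pow]; linarith [add_one_le_exp ((t * K) ^ 2)]

end mgf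

section sum

variable {Ω ι : Type*} [MeasurableSpace Ω] {μ : Measure Ω} [IsProbabilityMeasure μ]
  {X : ι → Ω → ℝ} {t : ℝ}

/-- The moment generating function of the sum is a product of positive numbers, hence nonzero,
which forces integrability. -/
lemma ProbabilityTheory.iIndepFun.integrable_exp_mul_sum₀ (h_indep : iIndepFun X μ)
    (h_meas : ∀ i, AEMeasurable (X i) μ) {s : Finset ι}
    (h_int : ∀ i ∈ s, Integrable (fun ω => exp (t * X i ω)) μ) :
    Integrable (fun ω => exp (t * (∑ i ∈ s, X i) ω)) μ := by
  refine Integrable.of_integral_ne_zero ?_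
  change mgf (∑ i ∈ s, X i) μ t ≠ 0
  rw [h_indep.mgf_sum₀ h_meas]
  exact (prod_pos fun i hi => mgf_pos' (IsProbabilityMeasure.ne_zero μ) (h_int i hi)).ne'

lemma measure_sum_ge_le_exp_of_integral_psi11_le_one [Fintype ι] {K : ι → ℝ}
    (h_indep : iIndepFun X μ) (hX : ∀ i, Integrable (X i) μ) (hmean : ∀ i, ∫ ω, X i ω ∂μ = 0)
    (hK : ∀ i, 0 < K i) (hint : ∀ i, Integrable (fun ω => exp (|X i ω| / K i)) μ)
    (horlicz : ∀ i, ∫ ω, psi11 (|X i ω| / K i) ∂μ ≤ 1) (ht : 0 ≤ t) (htK : ∀ i, t * K i ≤ 1)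
    (x : ℝ) : (μ {ω | x ≤ ∑ i, X i ω}).toReal ≤ exp (t ^ 2 * ∑ i, K i ^ 2 - t * x) := by
  have h_meas : ∀ i, AEMeasurable (X i) μ := fun i => (hX i).aemeasurable
  have h_int : Integrable (fun ω => exp (t * (∑ i, X i) ω)) μ :=
    h_indep.integrable_exp_mul_sum₀ h_meas fun i _ =>
      integrable_exp_mul_of_integrable_exp_abs_div (h_meas i) (hK i) (hint i) ht (htK i)
  have hmgf : mgf (∑ i, X i) μ t ≤ exp (t ^ 2 * ∑ i, K i ^ 2) := by
    rw [h_indep.mgf_sum₀ h_meas, mul_sum, exp_sum]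
    exact prod_le_prod (fun i _ => mgf_nonneg) fun i _ =>
      mgf_le_exp_sq_of_integral_psi11_le_one (hX i) (hmean i) (hK i) (hint i) (horlicz i) ht
        (htK i)
  have hchernoff := measure_ge_le_exp_mul_mgf x ht h_int
  simp only [measureReal_def, Finset.sum_apply] at hchernoff
  calc _ ≤ exp (-t * x) * mgf (∑ i, X i) μ t := hchernoff
    _ ≤ exp (-t * x) * exp (t ^ 2 * ∑ i, K i ^ 2) := by gcongr
    _ = exp (t ^ 2 * ∑ i, K i ^ 2 - t * x) := by rw [← exp_add]; ring_nf

end sum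

/-- The witness is `min (x / (2 B²)) (1 / M)`, the minimiser of `t² B² - t x` on `[0, 1 / M]`. -/
lemma exists_sq_mul_sub_mul_le_neg_min {B2 M x : ℝ} (hB2 : 0 < B2) (hM : 0 < M) (hx : 0 ≤ x) :
    ∃ t, 0 ≤ t ∧ t * M ≤ 1 ∧ t ^ 2 * B2 - t * x ≤ -min (x ^ 2 / (4 * B2)) (x / (2 * M)) := by
  rcases le_total (x / (2 * B2)) (1 / M) with hc | hc
  · refine ⟨x / (2 * B2), by positivity, by rwa [le_div_iff₀ hM] at hc, ?_⟩
    have heq : (x / (2 * B2)) ^ 2 * B2 - x / (2 * B2) * x = -(x ^ 2 / (4 * B2)) := by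
      field_simp; ring
    rw [heq, neg_le_neg_iff]
    exact min_le_left _ _
  · refine ⟨1 / M, by positivity, by field_simp; rfl, ?_⟩
    have hxM : 2 * B2 ≤ x * M := by rw [div_le_div_iff₀ hM (by positivity)] at hc; linarith
    have heq : (1 / M) ^ 2 * B2 - 1 / M * x = -(x / (2 * M)) + (2 * B2 - x * M) / (2 * M ^ 2) := by
      field_simp; ring
    have hneg : (2 * B2 - x * M) / (2 * M ^ 2) ≤ 0 :=
      div_nonpos_of_nonpos_of_nonneg (by linarith) (by positivity)
    rw [heq]
    linarith [min_le_right (x ^ 2 / (4 * B2)) (x / (2 * M))]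

/-- Theorem 2, combined form: for independent mean-zero `Xᵢ` with admissible `ψ₁₁`-Orlicz
constants `Kᵢ`, with `B² = ∑ Kᵢ²` and `M = max Kᵢ`, one has
`P(Sₙ ≥ x) ≤ exp(−min(x²/(4B²), x/(2M)))` for all `x ≥ 0`. -/
theorem tail_le_min_form {Ω : Type*} [MeasureSpace Ω]
    [IsProbabilityMeasure (ℙ : Measure Ω)]
    {ι : Type*} [Fintype ι] [Nonempty ι]
    (X : ι → Ω → ℝ) (K : ι → ℝ)
    (hindep : iIndepFun X ℙ)
    (hXint : ∀ i, Integrable (X i)) (hmean : ∀ i, ∫ ω, X i ω = 0)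
    (hK : ∀ i, 0 < K i)
    (hint : ∀ i, Integrable (fun ω => Real.exp (|X i ω| / K i)))
    (horlicz : ∀ i, ∫ ω, (Real.exp (|X i ω| / K i) - 1 - |X i ω| / K i) ≤ 1)
    (B M : ℝ) (hB : B ^ 2 = ∑ i, K i ^ 2)
    (hM : M = Finset.univ.sup' Finset.univ_nonempty K)
    (x : ℝ) (hx0 : 0 ≤ x) :
    (ℙ {ω | x ≤ ∑ i, X i ω}).toReal ≤
      Real.exp (-(min (x ^ 2 / (4 * B ^ 2)) (x / (2 * M)))) := by
  have hKM : ∀ i, K i ≤ M := fun i => hM ▸ le_sup' K (mem_univ i)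
  have hM0 : 0 < M := (hK (Classical.arbitrary ι)).trans_le (hKM _)
  have hB2 : 0 < B ^ 2 := hB ▸ sum_pos (fun i _ => pow_pos (hK i) 2) univ_nonempty
  obtain ⟨t, ht0, htM, hexponent⟩ := exists_sq_mul_sub_mul_le_neg_min hB2 hM0 hx0
  have htK : ∀ i, t * K i ≤ 1 := fun i => (mul_le_mul_of_nonneg_left (hKM i) ht0).trans htM
  calc _ ≤ exp (t ^ 2 * ∑ i, K i ^ 2 - t * x) :=
        measure_sum_ge_le_exp_of_integral_psi11_le_one hindep hXint hmean hK hint horlicz ht0 htK x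
    _ ≤ _ := by rw [← hB]; exact exp_le_exp.2 hexponent
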